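/- arXiv:quant-ph/0412157 — 5 statements merged into one kernel-verified Lean document; each statement's English description precedes it below -/
import Mathlib

section
/- Let A be a finite alphabet, Q a probability distribution on A with full support, and P, R probability distributions on A with ‖P − R‖₁ ≤ 1/2. Then H(P,Q) − H(R,Q) ≤ log(#A)·‖P − R‖₁ + η(‖P − R‖₁) − ‖P − R‖₁ · log Q_min, where η(t) = −t log t and Q_min = min_{a∈A} Q(a). -/
open Filter Finset

/-- Base-2 relative entropy (real-valued formula; meaningful when `P ≪ Q`). -/
noncomputable def klD {A : Type*} [Fintype A] (P Q : A → ℝ) : ℝ :=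
  ∑ a, P a * (Real.logb 2 (P a) - Real.logb 2 (Q a))

/-- Base-2 relative entropy with value `⊤` when `P` is not absolutely continuous w.r.t. `Q`. -/
noncomputable def klDE {A : Type*} [Fintype A] (P Q : A → ℝ) : EReal :=
  if ∀ a, Q a = 0 → P a = 0 then ((klD P Q : ℝ) : EReal) else ⊤

/-- ℓ¹ distance. -/
noncomputable def l1 {A : Type*} [Fintype A] (P Q : A → ℝ) : ℝ := ∑ a, |P a - Q a|

/-- Probability distribution on a finite set. -/
def IsProbDist {A : Type*} [Fintype A] (P : A → ℝ) : Prop := (∀ a, 0 ≤ P a) ∧ ∑ a, P a = 1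

/-- Empirical distribution (type) of a sequence. -/
noncomputable def emp {A : Type*} [Fintype A] [DecidableEq A] {n : ℕ} (x : Fin n → A) : A → ℝ :=
  fun a => ((Finset.univ.filter fun i => x i = a).card : ℝ) / n

/-- Product (i.i.d.) measure of a set of sequences. -/
noncomputable def prodP {A : Type*} [Fintype A] (Q : A → ℝ) {n : ℕ} (M : Set (Fin n → A)) : ℝ :=
  ∑ x : Fin n → A, Set.indicator M (fun y => ∏ i, Q (y i)) x

/-- Base-2 logarithm with value `⊥` at nonpositive reals. -/
noncomputable def elog2 (t : ℝ) : EReal := if t ≤ 0 then ⊥ else ((Real.logb 2 t : ℝ) : EReal)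

/-!
With `η = Real.negMulLog`, the difference of relative entropies splits as
`∑ (η (R a) - η (P a)) + ∑ (R a - P a) * log (Q a)`, all over `log 2`.
The second sum is at most `‖P - R‖₁ * (-log Q_min)` because `Q_min ≤ Q a ≤ 1`.
For the first, concavity of `η` gives the pointwise bound `η y - η x ≤ η |x - y|` whenever
`|x - y| ≤ 1/2`, and Jensen's inequality for `η` with uniform weights bounds
`∑ η (d a) ≤ δ * log #A + η δ`, where `δ = ∑ d a`.
-/

-- `b` and `c = a + d - b` are the convex combinations of `a` and `d` with swapped weights.
theorem ConcaveOn.map_add_map_le_of_add_eq {𝕜 : Type*} [Field 𝕜] [LinearOrder 𝕜]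
    [IsStrictOrderedRing 𝕜] {s : Set 𝕜} {f : 𝕜 → 𝕜} (hf : ConcaveOn 𝕜 s f) {a b c d : 𝕜}
    (ha : a ∈ s) (hd : d ∈ s) (hab : a ≤ b) (hbd : b ≤ d) (h : a + d = b + c) :
    f a + f d ≤ f b + f c := by
  rcases hab.eq_or_lt with rfl | hab
  · rw [add_left_cancel h]
  have hda : 0 < d - a := by linarith
  have hθ : 0 ≤ (d - b) / (d - a) := div_nonneg (by linarith) hda.le
  have hθ' : 0 ≤ (b - a) / (d - a) := div_nonneg (by linarith) hda.le
  have hsum : (d - b) / (d - a) + (b - a) / (d - a) = 1 := by field_simp; ring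
  have hb := hf.2 ha hd hθ hθ' hsum
  have hc := hf.2 ha hd hθ' hθ (by rw [add_comm, hsum])
  have eb : ((d - b) / (d - a)) • a + ((b - a) / (d - a)) • d = b := by
    simp only [smul_eq_mul]; field_simp; ring
  have ec : ((b - a) / (d - a)) • a + ((d - b) / (d - a)) • d = c := by
    simp only [smul_eq_mul]; field_simp; linear_combination (d - a) * h
  rw [eb] at hb
  rw [ec] at hc
  simp only [smul_eq_mul] at hb hc
  linear_combination hb + hc - (f a + f d) * hsum

namespace Real

theorem negMulLog_add_le {x y : ℝ} (hx : 0 ≤ x) (hy : 0 ≤ y) :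
    negMulLog (x + y) ≤ negMulLog x + negMulLog y := by
  simpa using concaveOn_negMulLog.map_add_map_le_of_add_eq (Set.mem_Ici.2 le_rfl)
    (Set.mem_Ici.2 (add_nonneg hx hy)) hx (le_add_of_nonneg_right hy) (zero_add (x + y))

-- Concavity of `log` between `t` and `1`, evaluated at `1 - t`.
theorem negMulLog_one_sub_le {t : ℝ} (h0 : 0 ≤ t) (h1 : t ≤ 1 / 2) :
    negMulLog (1 - t) ≤ negMulLog t := by
  rcases h0.eq_or_lt with rfl | h0
  · simp
  have h1t : 0 < 1 - t := by linarith
  have hθ : 0 ≤ t / (1 - t) := by positivity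
  have hθ' : 0 ≤ 1 - t / (1 - t) := by rw [sub_nonneg, div_le_one h1t]; linarith
  have key := strictConcaveOn_log_Ioi.concaveOn.2 (Set.mem_Ioi.2 h0) (Set.mem_Ioi.2 one_pos)
    hθ hθ' (add_sub_cancel _ _)
  have e : (t / (1 - t)) • t + (1 - t / (1 - t)) • (1 : ℝ) = 1 - t := by
    simp only [smul_eq_mul]; field_simp; ring
  rw [e, log_one, smul_eq_mul, smul_eq_mul, mul_zero, add_zero, div_mul_eq_mul_div,
    div_le_iff₀ h1t] at key
  simp only [negMulLog]
  linarith

theorem negMulLog_sub_negMulLog_le {x y : ℝ} (hx0 : 0 ≤ x) (hx1 : x ≤ 1) (hy : 0 ≤ y)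
    (hxy : |x - y| ≤ 1 / 2) :
    negMulLog y - negMulLog x ≤ negMulLog |x - y| := by
  rcases le_total x y with h | h
  · rw [abs_sub_comm, abs_of_nonneg (sub_nonneg.2 h)]
    have := negMulLog_add_le hx0 (sub_nonneg.2 h)
    rw [add_sub_cancel] at this
    linarith
  · rw [abs_of_nonneg (sub_nonneg.2 h)] at hxy ⊢
    -- compare the pair `(y, x)` with the extreme pair `(1 - (x - y), 1)`
    have h4 := concaveOn_negMulLog.map_add_map_le_of_add_eq (Set.mem_Ici.2 hy)
      (Set.mem_Ici.2 zero_le_one) h hx1 (show y + 1 = x + (1 - (x - y)) by ring)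
    have := negMulLog_one_sub_le (sub_nonneg.2 h) hxy
    rw [negMulLog_one] at h4
    linarith

theorem sum_negMulLog_le {ι : Type*} [Fintype ι] [Nonempty ι] {d : ι → ℝ}
    (hd : ∀ i, 0 ≤ d i) :
    ∑ i, negMulLog (d i) ≤
      (∑ i, d i) * log (Fintype.card ι) + negMulLog (∑ i, d i) := by
  set n : ℝ := (Fintype.card ι : ℝ)
  have hn : 0 < n := by simp [n, Fintype.card_pos]
  have jensen := concaveOn_negMulLog.le_map_sum (t := univ) (w := fun _ => n⁻¹) (p := d)
    (fun _ _ => by positivity) (by simp [n, hn.ne']) (fun i _ => Set.mem_Ici.2 (hd i))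
  have hinv : negMulLog n⁻¹ = n⁻¹ * log n := by simp [negMulLog, log_inv]
  simp only [smul_eq_mul, ← mul_sum, negMulLog_mul, hinv] at jensen
  rw [← mul_le_mul_iff_of_pos_left (inv_pos.2 hn)]
  linarith

end Real

section

open Real

variable {A : Type*} [Fintype A]

theorem IsProbDist.le_one {P : A → ℝ} (hP : IsProbDist P) (a : A) : P a ≤ 1 :=
  hP.2 ▸ single_le_sum (fun b _ => hP.1 b) (mem_univ a)

theorem abs_sub_le_l1 (P R : A → ℝ) (a : A) : |P a - R a| ≤ l1 P R :=
  single_le_sum (f := fun b => |P b - R b|) (fun _ _ => abs_nonneg _) (mem_univ a)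

theorem klD_sub_klD (P R Q : A → ℝ) :
    klD P Q - klD R Q =
      (∑ a, (negMulLog (R a) - negMulLog (P a)) + ∑ a, (R a - P a) * log (Q a)) / log 2 := by
  simp only [klD, logb, negMulLog, ← sum_sub_distrib, ← sum_add_distrib, sum_div]
  exact sum_congr rfl fun a _ => by ring

theorem sum_negMulLog_sub_negMulLog_le [Nonempty A] {P R : A → ℝ} (hP : IsProbDist P)
    (hR : ∀ a, 0 ≤ R a) (hl1 : l1 P R ≤ 1 / 2) :
    ∑ a, (negMulLog (R a) - negMulLog (P a)) ≤
      l1 P R * log (Fintype.card A) + negMulLog (l1 P R) :=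
  calc ∑ a, (negMulLog (R a) - negMulLog (P a)) ≤ ∑ a, negMulLog |P a - R a| :=
        sum_le_sum fun a _ => negMulLog_sub_negMulLog_le (hP.1 a) (hP.le_one a) (hR a)
          ((abs_sub_le_l1 P R a).trans hl1)
    _ ≤ l1 P R * log (Fintype.card A) + negMulLog (l1 P R) :=
        sum_negMulLog_le fun _ => abs_nonneg _

theorem sum_sub_mul_log_le {P R Q : A → ℝ} {m : ℝ} (hm : 0 < m) (hmQ : ∀ a, m ≤ Q a)
    (hQ : ∀ a, Q a ≤ 1) :
    ∑ a, (R a - P a) * log (Q a) ≤ l1 P R * -log m := by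
  rw [l1, sum_mul]
  refine sum_le_sum fun a _ => ?_
  have hlog : |log (Q a)| ≤ -log m := by
    rw [abs_of_nonpos (log_nonpos (hm.trans_le (hmQ a)).le (hQ a)), neg_le_neg_iff]
    exact log_le_log hm (hmQ a)
  calc (R a - P a) * log (Q a) ≤ |R a - P a| * |log (Q a)| := by
        rw [← abs_mul]; exact le_abs_self _
    _ ≤ |P a - R a| * -log m := by
        rw [abs_sub_comm]; exact mul_le_mul_of_nonneg_left hlog (abs_nonneg _)

end

/-- Continuity estimate for the relative entropy with a fully supported reference `Q`. -/
theorem rel_entropy_continuity {A : Type*} [Fintype A] [Nonempty A] (P R Q : A → ℝ)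
    (hP : IsProbDist P) (hR : IsProbDist R) (hQ : IsProbDist Q)
    (hQpos : ∀ a, 0 < Q a) (hl1 : l1 P R ≤ 1 / 2) :
    klD P Q - klD R Q ≤
      Real.logb 2 (Fintype.card A) * l1 P R + (-(l1 P R) * Real.logb 2 (l1 P R))
        - l1 P R * Real.logb 2 (Finset.univ.inf' Finset.univ_nonempty Q) := by
  set δ := l1 P R
  set Qmin := univ.inf' univ_nonempty Q
  have hQmin : 0 < Qmin := (lt_inf'_iff _).2 fun a _ => hQpos a
  have hent := sum_negMulLog_sub_negMulLog_le hP hR.1 hl1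
  have hcross := sum_sub_mul_log_le (P := P) (R := R) hQmin
    (fun a => inf'_le Q (mem_univ a)) hQ.le_one
  calc klD P Q - klD R Q
      ≤ (δ * Real.log (Fintype.card A) + Real.negMulLog δ + δ * -Real.log Qmin) / Real.log 2 := by
        rw [klD_sub_klD]
        exact div_le_div_of_nonneg_right (add_le_add hent hcross) (Real.log_nonneg one_le_two)
    _ = _ := by simp only [Real.logb, Real.negMulLog]; ring
end

section
/- Let A be a finite alphabet, Q a probability distribution on A, n a positive integer, and P a type of sequences in Aⁿ. Let T(P) ⊆ Aⁿ denote the set of sequences of type P. Then Qⁿ(T(P)) ≤ 2^{−n·H(P,Q)}, where Qⁿ is the n-fold product distribution and H(P,Q) is the base-2 relative entropy (with Qⁿ(T(P)) = 0 when H(P,Q) = ∞). -/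
open Filter Finset

private theorem prod_comp_count {A : Type*} [Fintype A] [DecidableEq A] {n : ℕ}
    (x : Fin n → A) (f : A → ℝ) :
    ∏ i, f (x i) = ∏ a, f a ^ (univ.filter fun i => x i = a).card := by
  rw [← Finset.prod_fiberwise_of_maps_to (g := x) (fun i _ => mem_univ (x i))
    (fun i => f (x i))]
  refine Finset.prod_congr rfl fun a _ => ?_
  rw [Finset.prod_congr rfl (fun i hi => show f (x i) = f a by
      simp only [mem_filter] at hi; rw [hi.2]), Finset.prod_const]

/-- Probability of a type class: `Qⁿ(T(P)) ≤ 2^{−n H(P,Q)}`, with `Qⁿ(T(P)) = 0`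
when `P` is not absolutely continuous w.r.t. `Q` (i.e. `H(P,Q) = ∞`). -/
theorem type_class_prob {A : Type*} [Fintype A] [DecidableEq A] (Q P : A → ℝ)
    (hQ : IsProbDist Q) (n : ℕ) (hn : 0 < n) (htype : ∃ x : Fin n → A, emp x = P) :
    ((∀ a, Q a = 0 → P a = 0) →
        prodP Q {x : Fin n → A | emp x = P} ≤ (2 : ℝ) ^ (-(n : ℝ) * klD P Q)) ∧
    (¬ (∀ a, Q a = 0 → P a = 0) → prodP Q {x : Fin n → A | emp x = P} = 0) := by
  classical
  obtain ⟨x₀, hx₀⟩ := htype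
  have hn' : (n : ℝ) ≠ 0 := Nat.cast_ne_zero.mpr hn.ne'
  have hPnn : ∀ a, 0 ≤ P a := by
    intro a; rw [← hx₀]; unfold emp; positivity
  have hcount : ∀ (x : Fin n → A), emp x = P → ∀ a,
      (((univ.filter fun i => x i = a).card : ℕ) : ℝ) = n * P a := by
    intro x hx a
    have h := congrFun hx a
    unfold emp at h
    rw [← h]; field_simp
  have hPsum : ∑ a, P a = 1 := by
    have hcf : (univ : Finset (Fin n)).card = ∑ a, (univ.filter fun i => x₀ i = a).card :=
      Finset.card_eq_sum_card_fiberwise (fun i _ => mem_univ (x₀ i))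
    have : (n : ℝ) * ∑ a, P a = n := by
      rw [Finset.mul_sum]
      have := congrArg (fun m : ℕ => (m : ℝ)) hcf
      simp only [Finset.card_univ, Fintype.card_fin, Nat.cast_sum] at this
      rw [Finset.sum_congr rfl (fun a _ => (hcount x₀ hx₀ a).symm), ← this]
    have h1 : (n : ℝ) * ∑ a, P a = (n : ℝ) * 1 := by rw [this, mul_one]
    exact mul_left_cancel₀ hn' h1
  -- sum over the type class
  have hsum : prodP Q {x : Fin n → A | emp x = P} =
      ∑ x ∈ univ.filter (fun x : Fin n → A => emp x = P), ∏ i, Q (x i) := by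
    unfold prodP
    rw [Finset.sum_indicator_eq_sum_filter]
    congr 1
  constructor
  · intro habs
    set D := klD P Q with hD
    set C := (2 : ℝ) ^ (-(n : ℝ) * D) with hC
    have hCpos : 0 < C := Real.rpow_pos_of_pos (by norm_num) _
    -- C as a product over a
    have hCprod : C = ∏ a, (2 : ℝ) ^ ((n * P a) * (Real.logb 2 (Q a) - Real.logb 2 (P a))) := by
      rw [hC, hD, klD, ← Real.rpow_sum_of_pos (by norm_num : (0:ℝ) < 2)]
      congr 1
      rw [Finset.mul_sum]
      exact Finset.sum_congr rfl fun a _ => by ring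
    -- per-x identity
    have hx_eq : ∀ x : Fin n → A, emp x = P →
        ∏ i, Q (x i) = (∏ i, P (x i)) * C := by
      intro x hx
      rw [prod_comp_count x Q, prod_comp_count x P, hCprod, ← Finset.prod_mul_distrib]
      refine Finset.prod_congr rfl fun a _ => ?_
      set c : ℕ := (univ.filter fun i => x i = a).card with hc
      have hcR : (c : ℝ) = n * P a := hcount x hx a
      rw [← hcR]
      rcases eq_or_lt_of_le (hPnn a) with hP0 | hPpos
      · have hc0 : c = 0 := by
          have : (c : ℝ) = 0 := by rw [hcR, ← hP0, mul_zero]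
          exact_mod_cast this
        simp [hc0]
      · have hQpos : 0 < Q a := by
          rcases eq_or_lt_of_le (hQ.1 a) with h | h
          · exact absurd (habs a h.symm) hPpos.ne'
          · exact h
        have hlog : Real.logb 2 (Q a) - Real.logb 2 (P a) = Real.logb 2 (Q a / P a) :=
          (Real.logb_div (ne_of_gt hQpos) (ne_of_gt hPpos)).symm
        rw [hlog, mul_comm (c : ℝ), Real.rpow_mul (by norm_num : (0:ℝ) ≤ 2),
          Real.rpow_logb (by norm_num) (by norm_num) (div_pos hQpos hPpos),
          Real.rpow_natCast, ← mul_pow, mul_div_cancel₀ _ (ne_of_gt hPpos)]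
    rw [hsum, Finset.sum_congr rfl (fun x hx => hx_eq x (by simpa using hx))]
    have hle : ∑ x ∈ univ.filter (fun x : Fin n → A => emp x = P), (∏ i, P (x i)) * C ≤
        ∑ x : Fin n → A, (∏ i, P (x i)) * C := by
      refine Finset.sum_le_sum_of_subset_of_nonneg (Finset.filter_subset _ _) ?_
      intro x _ _
      exact mul_nonneg (Finset.prod_nonneg fun i _ => hPnn (x i)) hCpos.le
    refine hle.trans ?_
    rw [← Finset.sum_mul]
    have : ∑ x : Fin n → A, ∏ i, P (x i) = 1 := by
      have := Finset.prod_univ_sum (fun _ : Fin n => (univ : Finset A)) (fun _ a => P a)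
      rw [Fintype.piFinset_univ] at this
      rw [← this]
      simp [hPsum]
    rw [this, one_mul]
  · intro habs
    push_neg at habs
    obtain ⟨a, hQa, hPa⟩ := habs
    rw [hsum]
    refine Finset.sum_eq_zero fun x hx => ?_
    have hx' : emp x = P := by simpa using hx
    have hPapos : 0 < P a := lt_of_le_of_ne (hPnn a) (Ne.symm hPa)
    have hcpos : 0 < ((univ.filter fun i => x i = a).card : ℝ) := by
      rw [hcount x hx' a]
      positivity
    have : (univ.filter fun i => x i = a).Nonempty := by
      rw [← Finset.card_pos]
      exact_mod_cast hcpos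
    obtain ⟨i, hi⟩ := this
    simp only [mem_filter] at hi
    exact Finset.prod_eq_zero (mem_univ i) (by rw [hi.2, hQa])
end

section
/- Let A be a finite alphabet, Q a probability distribution on A, n a positive integer, and Ω_n a set of probability distributions on A. Let M_n = {x^n ∈ Aⁿ : P_{x^n} ∈ Ω_n} be the set of sequences whose empirical distribution lies in Ω_n. Then Qⁿ(M_n) ≤ (n+1)^{#A} · 2^{−n·inf_{R∈Ω_n} H(R,Q)}. -/
open Filter Finset

section Aux
variable {A : Type*} [Fintype A] [DecidableEq A] {n : ℕ}

lemma sum_count (x : Fin n → A) : ∑ a, (Finset.univ.filter fun i => x i = a).card = n := by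
  rw [← Finset.card_eq_sum_card_fiberwise (f := x) (t := univ) (fun i _ => mem_univ _),
    Finset.card_univ, Fintype.card_fin]

lemma prod_comp_eq (f : A → ℝ) (x : Fin n → A) :
    ∏ i, f (x i) = ∏ a, f a ^ (Finset.univ.filter fun i => x i = a).card := by
  rw [← Finset.prod_fiberwise_of_maps_to (g := x) (t := univ) (fun i _ => mem_univ _)
    (fun i => f (x i))]
  refine Finset.prod_congr rfl fun a _ => ?_
  rw [← Finset.prod_const]
  exact Finset.prod_congr rfl fun i hi => by simp [(mem_filter.1 hi).2]

lemma emp_prob (hn : 0 < n) (x : Fin n → A) : IsProbDist (emp x) := by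
  constructor
  · intro a; exact div_nonneg (Nat.cast_nonneg _) (Nat.cast_nonneg _)
  · rw [show (∑ a, emp x a) = (∑ a, ((Finset.univ.filter fun i => x i = a).card : ℝ)) / n by
      rw [Finset.sum_div]; rfl]
    rw [← Nat.cast_sum, sum_count]
    field_simp

lemma emp_mul (hn : 0 < n) (x : Fin n → A) (a : A) :
    (n : ℝ) * emp x a = ((Finset.univ.filter fun i => x i = a).card : ℝ) := by
  rw [emp]; field_simp

/-- key identity: if emp x ≪ Q then ∏ Q(x i) = (∏ emp x (x i)) * 2^(-n * klD (emp x) Q). -/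
lemma key_id (hn : 0 < n) (Q : A → ℝ) (hQ0 : ∀ a, 0 ≤ Q a) (x : Fin n → A)
    (habs : ∀ a, Q a = 0 → emp x a = 0) :
    ∏ i, Q (x i) = (∏ i, emp x (x i)) * (2 : ℝ) ^ (-(n : ℝ) * klD (emp x) Q) := by
  set P := emp x with hP
  set k : A → ℕ := fun a => (Finset.univ.filter fun i => x i = a).card with hk
  have hnk : ∀ a, (n : ℝ) * P a = (k a : ℝ) := emp_mul hn x
  have hexp : -(n : ℝ) * klD P Q = ∑ a, (k a : ℝ) * (Real.logb 2 (Q a) - Real.logb 2 (P a)) := by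
    rw [klD, Finset.mul_sum]
    refine Finset.sum_congr rfl fun a _ => ?_
    rw [← hnk a]; ring
  rw [prod_comp_eq Q x, prod_comp_eq P x, hexp,
    Real.rpow_sum_of_pos (by norm_num : (0:ℝ) < 2), ← Finset.prod_mul_distrib]
  refine Finset.prod_congr rfl fun a _ => ?_
  rcases Nat.eq_zero_or_pos (k a) with h0 | hpos
  · have h0' : (Finset.univ.filter fun i => x i = a).card = 0 := h0
    rw [h0']
    simp [h0]
  · have hkpos : (0 : ℝ) < (k a : ℝ) := by exact_mod_cast hpos
    have hPa : 0 < P a := div_pos hkpos (by exact_mod_cast hn)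
    have hQa : 0 < Q a := by
      rcases (hQ0 a).lt_or_eq with h | h
      · exact h
      · exact absurd (habs a h.symm) hPa.ne'
    have h2 : (2 : ℝ) ^ ((k a : ℝ) * (Real.logb 2 (Q a) - Real.logb 2 (P a)))
        = (Q a / P a) ^ (k a) := by
      rw [mul_comm, Real.rpow_mul (by norm_num), Real.rpow_natCast]
      congr 1
      rw [← Real.logb_div hQa.ne' hPa.ne',
        Real.rpow_logb (by norm_num) (by norm_num) (by positivity)]
    rw [h2, ← mul_pow, mul_div_cancel₀ _ hPa.ne']

end Aux

/-- Upper bound for the probability of sequences whose empirical distribution lies in `Ωₙ`: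
`Qⁿ(Mₙ) ≤ (n+1)^{#A} · 2^{−n·inf_{R∈Ωₙ} H(R,Q)}`.  The infimum (possibly `∞`, with the
convention `inf ∅ = ∞`) is expressed through all real lower bounds `c` of the relative
entropies, which is equivalent by monotone continuity of `c ↦ 2^{−nc}`. -/
theorem empirical_set_upper_bound {A : Type*} [Fintype A] [DecidableEq A] (Q : A → ℝ)
    (hQ : IsProbDist Q) (n : ℕ) (hn : 0 < n) (Ωn : Set (A → ℝ)) (c : ℝ)
    (hc : ∀ R, IsProbDist R → R ∈ Ωn → (c : EReal) ≤ klDE R Q) :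
    prodP Q {x : Fin n → A | emp x ∈ Ωn} ≤
      ((n : ℝ) + 1) ^ (Fintype.card A) * (2 : ℝ) ^ (-(n : ℝ) * c) := by
  classical
  have h2pos : (0:ℝ) < (2:ℝ) ^ (-(n:ℝ) * c) := Real.rpow_pos_of_pos (by norm_num) _
  set T : Finset (Fin n → A) := univ.filter (fun x => emp x ∈ Ωn) with hT
  have hprod : prodP Q {x : Fin n → A | emp x ∈ Ωn} = ∑ x ∈ T, ∏ i, Q (x i) := by
    rw [prodP, hT, Finset.sum_filter]
    simp [Set.indicator_apply]
  -- per-sequence bound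
  have hper : ∀ x ∈ T, ∏ i, Q (x i) ≤ (∏ i, emp x (x i)) * (2:ℝ) ^ (-(n:ℝ) * c) := by
    intro x hx
    have hxΩ : emp x ∈ Ωn := (Finset.mem_filter.1 hx).2
    have hnonneg : (0:ℝ) ≤ ∏ i, emp x (x i) :=
      Finset.prod_nonneg fun i _ => (emp_prob hn x).1 _
    by_cases habs : ∀ a, Q a = 0 → emp x a = 0
    · have hcle : c ≤ klD (emp x) Q := by
        have h := hc (emp x) (emp_prob hn x) hxΩ
        rw [klDE, if_pos habs] at h
        exact_mod_cast h
      rw [key_id hn Q hQ.1 x habs]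
      refine mul_le_mul_of_nonneg_left ?_ hnonneg
      apply Real.rpow_le_rpow_of_exponent_le (by norm_num)
      exact mul_le_mul_of_nonpos_left hcle (neg_nonpos.2 (Nat.cast_nonneg n))
    · push_neg at habs
      obtain ⟨a, hQa, hPa⟩ := habs
      have hcard : (Finset.univ.filter fun i => x i = a).Nonempty := by
        rw [Finset.nonempty_iff_ne_empty]
        intro h
        apply hPa
        rw [emp, h]
        simp
      obtain ⟨i, hi⟩ := hcard
      have : Q (x i) = 0 := by rw [(Finset.mem_filter.1 hi).2, hQa]
      rw [Finset.prod_eq_zero (Finset.mem_univ i) this]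
      exact mul_nonneg hnonneg h2pos.le
  -- group by type
  have hgroup : ∑ x ∈ T, (∏ i, emp x (x i)) ≤ ((n:ℝ)+1) ^ Fintype.card A := by
    rw [← Finset.sum_fiberwise_of_maps_to (g := emp) (t := T.image emp)
        (fun x hx => Finset.mem_image_of_mem _ hx) (fun x => ∏ i, emp x (x i))]
    have hinner : ∀ P ∈ T.image emp, ∑ x ∈ T.filter (emp · = P), ∏ i, emp x (x i) ≤ 1 := by
      intro P hP
      obtain ⟨y, _, hy⟩ := Finset.mem_image.1 hP
      have hPd : IsProbDist P := hy ▸ emp_prob hn y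
      have h1 : ∑ x ∈ T.filter (emp · = P), ∏ i, emp x (x i)
          = ∑ x ∈ T.filter (emp · = P), ∏ i, P (x i) := by
        refine Finset.sum_congr rfl fun x hx => ?_
        rw [(Finset.mem_filter.1 hx).2]
      rw [h1]
      calc ∑ x ∈ T.filter (emp · = P), ∏ i, P (x i)
          ≤ ∑ x : Fin n → A, ∏ i, P (x i) :=
            Finset.sum_le_sum_of_subset_of_nonneg (Finset.subset_univ _)
              (fun x _ _ => Finset.prod_nonneg fun i _ => hPd.1 _)
        _ = ∏ _i : Fin n, ∑ a, P a := by
            rw [Finset.prod_univ_sum (fun _ => (univ : Finset A)) (fun _ a => P a),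
              Fintype.piFinset_univ]
        _ = 1 := by rw [hPd.2]; simp
    calc ∑ P ∈ T.image emp, ∑ x ∈ T.filter (emp · = P), ∏ i, emp x (x i)
        ≤ ∑ _P ∈ T.image emp, (1:ℝ) := Finset.sum_le_sum hinner
      _ = ((T.image emp).card : ℝ) := by simp
      _ ≤ ((n:ℝ)+1) ^ Fintype.card A := by
          have hc1 : (T.image emp).card ≤ (n+1) ^ Fintype.card A := by
            have hcnt : T.image emp = (T.image (fun x (a : A) =>
                (⟨(Finset.univ.filter fun i => x i = a).card,
                  Nat.lt_succ_of_le (le_trans (Finset.card_filter_le _ _)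
                    (by rw [Finset.card_univ, Fintype.card_fin]))⟩ : Fin (n+1)))).image
                (fun g a => ((g a : ℕ) : ℝ) / n) := by
              rw [Finset.image_image]
              rfl
            rw [hcnt]
            calc _ ≤ (T.image _).card := Finset.card_image_le
              _ ≤ Fintype.card (A → Fin (n+1)) := Finset.card_le_univ _
              _ = (n+1) ^ Fintype.card A := by
                  rw [Fintype.card_fun, Fintype.card_fin]
          calc ((T.image emp).card : ℝ) ≤ (((n+1) ^ Fintype.card A : ℕ) : ℝ) := by
                exact_mod_cast hc1
            _ = ((n:ℝ)+1) ^ Fintype.card A := by push_cast; ring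
  calc prodP Q {x : Fin n → A | emp x ∈ Ωn}
      = ∑ x ∈ T, ∏ i, Q (x i) := hprod
    _ ≤ ∑ x ∈ T, (∏ i, emp x (x i)) * (2:ℝ) ^ (-(n:ℝ) * c) := Finset.sum_le_sum hper
    _ = (∑ x ∈ T, ∏ i, emp x (x i)) * (2:ℝ) ^ (-(n:ℝ) * c) := by rw [Finset.sum_mul]
    _ ≤ ((n:ℝ)+1) ^ Fintype.card A * (2:ℝ) ^ (-(n:ℝ) * c) :=
        mul_le_mul_of_nonneg_right hgroup h2pos.le
end

section
/- Let A be a finite alphabet, P a probability distribution on A, ε > 0, and n a positive integer. Let M be the set of x^n ∈ Aⁿ with ‖P_{x^n} − P‖₁ > ε. Then Pⁿ(M) ≤ (n+1)^{#A} · 2^{−n·ε²/(2 ln 2)}. -/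
open Filter Finset

/-
Group the sequences by their type `R = P_x`. For `x` of type `R`, `Pⁿ(x) = 2^{-n D(R‖P)} Rⁿ(x)`, so
`Pⁿ(T(R)) ≤ 2^{-n D(R‖P)} Rⁿ(T(R)) ≤ 2^{-n D(R‖P)}`. A bad type has `‖R - P‖₁ > ε`, so Pinsker's
inequality gives `D(R‖P) ≥ ε² / (2 ln 2)`, and there are at most `(n + 1)^{#A}` types. Pinsker's
inequality itself follows from Cauchy–Schwarz and `x log x - x + 1 ≥ 3 (x - 1)² / (2 (x + 2))`.
-/

open Real

lemma apply_one_le_of_hasDerivAt_of_sub_one_mul_nonneg {f f' : ℝ → ℝ}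
    (hf : ∀ y, 0 < y → HasDerivAt f (f' y) y) (hsign : ∀ y, 0 < y → 0 ≤ (y - 1) * f' y)
    {x : ℝ} (hx : 0 < x) : f 1 ≤ f x := by
  have hcont : ContinuousOn f (Set.Ioi 0) := fun y hy =>
    (hf y hy).continuousAt.continuousWithinAt
  rcases le_total x 1 with hx1 | hx1
  · refine antitoneOn_of_hasDerivWithinAt_nonpos (f' := f') (convex_Ioc 0 1)
      (hcont.mono Set.Ioc_subset_Ioi_self) (fun y hy => ?_) (fun y hy => ?_)
      ⟨hx, hx1⟩ ⟨one_pos, le_rfl⟩ hx1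
    · rw [interior_Ioc] at hy
      exact (hf y hy.1).hasDerivWithinAt
    · rw [interior_Ioc] at hy
      nlinarith [hsign y hy.1, hy.2]
  · refine monotoneOn_of_hasDerivWithinAt_nonneg (f' := f') (convex_Ici 1)
      (hcont.mono fun y (hy : 1 ≤ y) => zero_lt_one.trans_le hy) (fun y hy => ?_) (fun y hy => ?_)
      Set.self_mem_Ici hx1 hx1
    · rw [interior_Ici] at hy
      exact (hf y (zero_lt_one.trans hy)).hasDerivWithinAt
    · rw [interior_Ici] at hy
      nlinarith [hsign y (zero_lt_one.trans hy), Set.mem_Ioi.1 hy]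

lemma monotoneOn_log_sub_two_mul_sub_one_div_add_one :
    MonotoneOn (fun x => log x - 2 * (x - 1) / (x + 1)) (Set.Ioi 0) := by
  have hderiv : ∀ x ∈ Set.Ioi (0 : ℝ), HasDerivAt (fun x => log x - 2 * (x - 1) / (x + 1))
      (x⁻¹ - 4 / (x + 1) ^ 2) x := by
    intro x hx
    have hx1 : x + 1 ≠ 0 := by linarith [Set.mem_Ioi.1 hx]
    refine ((hasDerivAt_log (ne_of_gt hx)).sub
      ((((hasDerivAt_id x).sub_const 1).const_mul 2).div ((hasDerivAt_id x).add_const 1) hx1)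
      ).congr_deriv ?_
    simp only [id]
    ring
  refine monotoneOn_of_hasDerivWithinAt_nonneg (convex_Ioi 0)
    (fun x hx => (hderiv x hx).continuousAt.continuousWithinAt)
    (fun x hx => (hderiv x (interior_subset hx)).hasDerivWithinAt) fun x hx => ?_
  rw [interior_Ioi] at hx
  have hx0 : 0 < x := hx
  rw [sub_nonneg, div_le_iff₀ (by positivity), inv_mul_eq_div, le_div_iff₀ hx0]
  nlinarith [sq_nonneg (x - 1)]

lemma sub_one_mul_log_sub_two_mul_sub_one_div_add_one_nonneg {x : ℝ} (hx : 0 < x) :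
    0 ≤ (x - 1) * (log x - 2 * (x - 1) / (x + 1)) := by
  have hmono := monotoneOn_log_sub_two_mul_sub_one_div_add_one
  have h1 : log 1 - 2 * (1 - 1) / (1 + 1) = 0 := by norm_num
  rcases le_total x 1 with hx1 | hx1
  · have := hmono hx (Set.mem_Ioi.2 one_pos) hx1
    simp only [h1] at this
    nlinarith
  · have := hmono (Set.mem_Ioi.2 one_pos) hx hx1
    simp only [h1] at this
    nlinarith

lemma three_mul_sub_one_sq_div_le_mul_log_sub_add_one {x : ℝ} (hx : 0 ≤ x) :
    3 * (x - 1) ^ 2 / (2 * (x + 2)) ≤ x * log x - x + 1 := by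
  rcases hx.eq_or_lt with rfl | hx
  · norm_num
  let f : ℝ → ℝ := fun y => y * log y - y + 1 - 3 * (y - 1) ^ 2 / (2 * (y + 2))
  let f' : ℝ → ℝ := fun y => log y - 3 * ((y - 1) * (y + 5)) / (2 * (y + 2) ^ 2)
  have hderiv : ∀ y, 0 < y → HasDerivAt f (f' y) y := by
    intro y hy
    have hy2 : 2 * (y + 2) ≠ 0 := by positivity
    refine ((((hasDerivAt_mul_log (ne_of_gt hy)).sub (hasDerivAt_id y)).add_const 1).sub
      (((((hasDerivAt_id y).sub_const 1).pow 2).const_mul 3).div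
        (((hasDerivAt_id y).add_const 2).const_mul 2) hy2)).congr_deriv ?_
    simp only [f', id, Pi.pow_apply]
    field_simp
    ring
  -- `(y - 1) f' y` is the previous lemma plus `(y - 1) ^ 4 / (2 (y + 1) (y + 2) ^ 2)`.
  have hsign : ∀ y, 0 < y → 0 ≤ (y - 1) * f' y := by
    intro y hy
    have hlog := sub_one_mul_log_sub_two_mul_sub_one_div_add_one_nonneg hy
    have hrat : 0 ≤ (y - 1) *
        (2 * (y - 1) / (y + 1) - 3 * ((y - 1) * (y + 5)) / (2 * (y + 2) ^ 2)) := by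
      rw [div_sub_div _ _ (by positivity) (by positivity), ← mul_div_assoc]
      apply div_nonneg _ (by positivity)
      nlinarith [sq_nonneg (y - 1), sq_nonneg ((y - 1) ^ 2)]
    simp only [f']
    nlinarith
  have := apply_one_le_of_hasDerivAt_of_sub_one_mul_nonneg hderiv hsign hx
  simp only [f] at this
  norm_num at this
  linarith

lemma three_mul_sub_sq_div_le_mul_log_sub {p q : ℝ} (hp : 0 ≤ p) (hq : 0 ≤ q)
    (hpq : p = 0 → q = 0) :
    3 * (q - p) ^ 2 / (2 * (q + 2 * p)) ≤ q * (log q - log p) - q + p := by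
  rcases hp.eq_or_lt with rfl | hp
  · simp [hpq rfl]
  rcases hq.eq_or_lt with rfl | hq
  · rw [div_le_iff₀ (by positivity)]
    nlinarith
  have key := mul_le_mul_of_nonneg_left
    (three_mul_sub_one_sq_div_le_mul_log_sub_add_one (div_nonneg hq.le hp.le)) hp.le
  rw [log_div hq.ne' hp.ne'] at key
  calc 3 * (q - p) ^ 2 / (2 * (q + 2 * p))
      = p * (3 * (q / p - 1) ^ 2 / (2 * (q / p + 2))) := by field_simp
    _ ≤ p * (q / p * (log q - log p) - q / p + 1) := key
    _ = q * (log q - log p) - q + p := by field_simp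

theorem sq_l1_le_two_mul_log_two_mul_klD {A : Type*} [Fintype A] {P Q : A → ℝ}
    (hP : IsProbDist P) (hQ : IsProbDist Q) (hQP : ∀ a, P a = 0 → Q a = 0) :
    l1 Q P ^ 2 ≤ 2 * log 2 * klD Q P := by
  have hklD : log 2 * klD Q P = ∑ a, (Q a * (log (Q a) - log (P a)) - Q a + P a) := by
    rw [sum_add_distrib, sum_sub_distrib, hP.2, hQ.2, sub_add_cancel, klD, mul_sum]
    refine sum_congr rfl fun a _ => ?_
    rw [logb, logb]
    field_simp
  have hCS :
      l1 Q P ^ 2 ≤ (∑ a, (Q a - P a) ^ 2 / (Q a + 2 * P a)) * ∑ a, (Q a + 2 * P a) := by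
    refine sum_sq_le_sum_mul_sum_of_sq_le_mul _ (fun a _ => by positivity [hP.1 a, hQ.1 a])
      (fun a _ => by linarith [hP.1 a, hQ.1 a]) fun a _ => ?_
    rw [sq_abs, div_mul_cancel_of_imp]
    intro h
    have hPa : P a = 0 := by linarith [hP.1 a, hQ.1 a]
    simp [hPa, hQP a hPa]
  have hmass : ∑ a, (Q a + 2 * P a) = 3 := by
    rw [sum_add_distrib, ← mul_sum, hP.2, hQ.2]
    norm_num
  calc l1 Q P ^ 2 ≤ 2 * ∑ a, 3 * (Q a - P a) ^ 2 / (2 * (Q a + 2 * P a)) := by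
        rw [hmass] at hCS
        convert hCS using 1
        rw [mul_sum, sum_mul]
        refine sum_congr rfl fun a _ => ?_
        rw [← div_div]
        ring
    _ ≤ 2 * log 2 * klD Q P := by
        rw [mul_assoc, hklD]
        gcongr with a
        exact three_mul_sub_sq_div_le_mul_log_sub (hP.1 a) (hQ.1 a) (hQP a)

section Types

variable {A : Type*} [Fintype A] {n : ℕ}

lemma sum_comp_eq_mul_sum_emp [DecidableEq A] (x : Fin n → A) (f : A → ℝ) :
    ∑ i, f (x i) = n * ∑ a, emp x a * f a := by
  rcases n.eq_zero_or_pos with rfl | hn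
  · simp
  rw [← sum_fiberwise univ x (fun i => f (x i)), mul_sum]
  refine sum_congr rfl fun a _ => ?_
  rw [sum_congr rfl fun i hi => by rw [(mem_filter.1 hi).2], sum_const, nsmul_eq_mul, emp]
  field_simp

lemma emp_isProbDist [DecidableEq A] (hn : 0 < n) (x : Fin n → A) : IsProbDist (emp x) := by
  refine ⟨fun a => by unfold emp; positivity, ?_⟩
  have h := sum_comp_eq_mul_sum_emp x fun _ => 1
  simp only [sum_const, card_univ, Fintype.card_fin, nsmul_eq_mul, mul_one] at h
  exact (mul_eq_left₀ (by positivity)).1 h.symm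

lemma emp_apply_pos [DecidableEq A] (x : Fin n → A) (i : Fin n) : 0 < emp x (x i) := by
  have : 0 < #{j | x j = x i} := card_pos.2 ⟨i, by simp⟩
  have : 0 < n := i.pos
  unfold emp
  positivity

lemma prod_comp_eq_two_rpow [DecidableEq A] (x : Fin n → A) {Q : A → ℝ} (hQ : ∀ i, 0 < Q (x i)) :
    ∏ i, Q (x i) = 2 ^ (n * ∑ a, emp x a * logb 2 (Q a)) := by
  rw [← sum_comp_eq_mul_sum_emp, rpow_sum_of_pos two_pos]
  exact prod_congr rfl fun i _ => (rpow_logb two_pos (by norm_num) (hQ i)).symm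

lemma prod_comp_le_two_rpow_mul [DecidableEq A] (x : Fin n → A) {P : A → ℝ} (hP : ∀ a, 0 ≤ P a) :
    ∏ i, P (x i) ≤ 2 ^ (-n * klD (emp x) P) * ∏ i, emp x (x i) := by
  by_cases hpos : ∀ i, 0 < P (x i)
  · rw [prod_comp_eq_two_rpow x hpos, prod_comp_eq_two_rpow x (emp_apply_pos x),
      ← rpow_add two_pos, klD]
    apply le_of_eq
    congr 1
    simp only [mul_sub, sum_sub_distrib]
    ring
  · push Not at hpos
    obtain ⟨i, hi⟩ := hpos
    rw [prod_eq_zero (mem_univ i) (le_antisymm hi (hP _))]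
    exact mul_nonneg (by positivity) (prod_nonneg fun i _ => (emp_apply_pos x i).le)

lemma prodP_le_one {Q : A → ℝ} (hQ : IsProbDist Q) (M : Set (Fin n → A)) : prodP Q M ≤ 1 := by
  calc prodP Q M ≤ ∑ x : Fin n → A, ∏ i, Q (x i) :=
        sum_le_sum fun x _ => Set.indicator_le_self' (fun y _ => prod_nonneg fun i _ => hQ.1 _) x
    _ = 1 := by rw [← Fintype.prod_sum fun (_ : Fin n) a => Q a, hQ.2, prod_const_one]

lemma prodP_le_sum_prodP_fiber {β : Type*} {Q : A → ℝ} (hQ : ∀ a, 0 ≤ Q a)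
    {M : Set (Fin n → A)} (g : (Fin n → A) → β) (B : Finset β)
    (hB : ∀ x ∈ M, g x ∈ B) : prodP Q M ≤ ∑ b ∈ B, prodP Q {x | g x = b} := by
  have hnonneg : ∀ (S : Set (Fin n → A)) x, 0 ≤ S.indicator (fun y => ∏ i, Q (y i)) x :=
    fun S => Set.indicator_nonneg fun y _ => prod_nonneg fun i _ => hQ _
  unfold prodP
  rw [sum_comm]
  refine sum_le_sum fun x _ => ?_
  by_cases hx : x ∈ M
  · rw [Set.indicator_of_mem hx,
      ← Set.indicator_of_mem (show x ∈ {y | g y = g x} from rfl) fun y => ∏ i, Q (y i)]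
    exact single_le_sum (f := fun b => Set.indicator {y | g y = b} _ x)
      (fun b _ => hnonneg _ x) (hB x hx)
  · rw [Set.indicator_of_notMem hx]
    exact sum_nonneg fun b _ => hnonneg _ x

lemma prodP_emp_eq_le [DecidableEq A] {P R : A → ℝ} (hP : ∀ a, 0 ≤ P a) (hR : IsProbDist R) :
    prodP P {x : Fin n → A | emp x = R} ≤ 2 ^ (-n * klD R P) := by
  calc prodP P {x | emp x = R} ≤ 2 ^ (-n * klD R P) * prodP R {x | emp x = R} := by
        unfold prodP
        rw [mul_sum]
        refine sum_le_sum fun x _ => ?_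
        by_cases hx : emp x = R
        · simp only [Set.indicator_of_mem (show x ∈ {x | emp x = R} from hx)]
          simpa only [hx] using prod_comp_le_two_rpow_mul x hP
        · simp [hx]
    _ ≤ 2 ^ (-n * klD R P) := mul_le_of_le_one_right (by positivity) (prodP_le_one hR _)

lemma prodP_emp_eq_eq_zero [DecidableEq A] {P R : A → ℝ} {a : A} (hPa : P a = 0)
    (hRa : R a ≠ 0) : prodP P {x : Fin n → A | emp x = R} = 0 := by
  refine sum_eq_zero fun x _ => Set.indicator_apply_eq_zero.2 fun (hx : emp x = R) => ?_
  obtain ⟨i, hi⟩ : ∃ i, x i = a := by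
    by_contra! h
    apply hRa
    simp [← hx, emp, h]
  exact prod_eq_zero (mem_univ i) (by rw [hi, hPa])

lemma prodP_emp_eq_le_of_lt_l1 [DecidableEq A] {P R : A → ℝ} (hP : IsProbDist P)
    (hR : IsProbDist R) {ε : ℝ} (hε : 0 ≤ ε) (hεR : ε < l1 R P) :
    prodP P {x : Fin n → A | emp x = R} ≤ 2 ^ (-(n : ℝ) * ε ^ 2 / (2 * log 2)) := by
  by_cases hRP : ∀ a, P a = 0 → R a = 0
  · refine (prodP_emp_eq_le hP.1 hR).trans (rpow_le_rpow_of_exponent_le one_le_two ?_)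
    have hpinsker := sq_l1_le_two_mul_log_two_mul_klD hP hR hRP
    have hε2 : ε ^ 2 ≤ l1 R P ^ 2 := pow_le_pow_left₀ hε hεR.le 2
    rw [neg_mul, neg_mul, neg_div, neg_le_neg_iff, mul_div_assoc]
    gcongr
    rw [div_le_iff₀ (by positivity [log_pos one_lt_two])]
    linarith
  · push Not at hRP
    obtain ⟨a, hPa, hRa⟩ := hRP
    rw [prodP_emp_eq_eq_zero hPa hRa]
    positivity

lemma card_image_emp_le [DecidableEq A] (n : ℕ) :
    #(univ.image (emp : (Fin n → A) → A → ℝ)) ≤ (n + 1) ^ Fintype.card A := by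
  let count : (Fin n → A) → A → Fin (n + 1) := fun x a =>
    ⟨#{i | x i = a}, Nat.lt_succ_of_le ((card_filter_le _ _).trans (by simp))⟩
  have hsub : univ.image (emp : (Fin n → A) → A → ℝ) ⊆
      univ.image fun (c : A → Fin (n + 1)) a => (c a : ℝ) / n := by
    intro R hR
    obtain ⟨x, -, rfl⟩ := mem_image.1 hR
    exact mem_image.2 ⟨count x, mem_univ _, rfl⟩
  calc _ ≤ _ := card_le_card hsub
    _ ≤ Fintype.card (A → Fin (n + 1)) := card_image_le
    _ = _ := by simp

end Types

/-- Large deviations of the empirical distribution: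
`Pⁿ{x : ‖P_x − P‖₁ > ε} ≤ (n+1)^{#A} · 2^{−n ε²/(2 ln 2)}`. -/
theorem empirical_distribution_deviation {A : Type*} [Fintype A] [DecidableEq A]
    (P : A → ℝ) (hP : IsProbDist P) (ε : ℝ) (hε : 0 < ε) (n : ℕ) (hn : 0 < n) :
    prodP P {x : Fin n → A | l1 (emp x) P > ε} ≤
      ((n : ℝ) + 1) ^ (Fintype.card A) * (2 : ℝ) ^ (-(n : ℝ) * ε ^ 2 / (2 * Real.log 2)) := by
  let B := (univ.image (emp : (Fin n → A) → A → ℝ)).filter fun R => ε < l1 R P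
  calc prodP P {x : Fin n → A | l1 (emp x) P > ε}
      ≤ ∑ R ∈ B, prodP P {x | emp x = R} := prodP_le_sum_prodP_fiber hP.1 emp B
        fun x hx => mem_filter.2 ⟨mem_image_of_mem _ (mem_univ x), hx⟩
    _ ≤ ∑ _R ∈ B, (2 : ℝ) ^ (-(n : ℝ) * ε ^ 2 / (2 * log 2)) := sum_le_sum fun R hR => by
        obtain ⟨hRemp, hεR⟩ := mem_filter.1 hR
        obtain ⟨x, -, rfl⟩ := mem_image.1 hRemp
        exact prodP_emp_eq_le_of_lt_l1 hP (emp_isProbDist hn x) hε.le hεR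
    _ ≤ _ := by
        rw [sum_const, nsmul_eq_mul]
        gcongr
        exact_mod_cast (card_filter_le _ _).trans (card_image_emp_le n)
end

section
/- Let A be a finite alphabet, Q a probability distribution on A, and P a probability distribution on A. For any sequence {M_n} of subsets M_n ⊆ Aⁿ with liminf_{n→∞} Pⁿ(M_n) > 0, it holds that liminf_{n→∞} (1/n) log Qⁿ(M_n) ≥ −H(P,Q) (classical Stein lower bound for tests). -/
open Filter Finset

section aux
variable {A : Type*} [Fintype A]

lemma sum_prod_eq {n : ℕ} (g : Fin n → A → ℝ) :
    ∑ x : Fin n → A, ∏ i, g i (x i) = ∏ i, ∑ a, g i a := by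
  rw [Finset.prod_univ_sum, Fintype.piFinset_univ]

lemma exp_pair (P g : A → ℝ) (hP1 : ∑ a, P a = 1) (hg : ∑ a, P a * g a = 0)
    {n : ℕ} (i j : Fin n) :
    ∑ x : Fin n → A, (∏ k, P (x k)) * (g (x i) * g (x j)) =
      if i = j then ∑ a, P a * (g a * g a) else 0 := by
  classical
  by_cases hij : i = j
  · subst hij
    rw [if_pos rfl]
    have key : ∀ x : Fin n → A, (∏ k, P (x k)) * (g (x i) * g (x i)) =
        ∏ k, (P (x k) * (if k = i then g (x k) * g (x k) else 1)) := by
      intro x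
      rw [Finset.prod_mul_distrib, Finset.prod_ite_eq' Finset.univ i
        (fun k => g (x k) * g (x k))]
      simp
    rw [Finset.sum_congr rfl fun x _ => key x,
      sum_prod_eq (fun k a => P a * (if k = i then g a * g a else 1))]
    have h2 : ∀ k : Fin n, (∑ a, P a * (if k = i then g a * g a else 1)) =
        (if k = i then (∑ a, P a * (g a * g a)) else 1) := by
      intro k
      by_cases hk : k = i <;> simp [hk, hP1]
    rw [Finset.prod_congr rfl fun k _ => h2 k,
      Finset.prod_ite_eq' Finset.univ i (fun _ => ∑ a, P a * (g a * g a))]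
    simp
  · rw [if_neg hij]
    have key : ∀ x : Fin n → A, (∏ k, P (x k)) * (g (x i) * g (x j)) =
        ∏ k, (P (x k) * ((if k = i then g (x k) else 1) * (if k = j then g (x k) else 1))) := by
      intro x
      rw [Finset.prod_mul_distrib, Finset.prod_mul_distrib,
        Finset.prod_ite_eq' Finset.univ i (fun k => g (x k)),
        Finset.prod_ite_eq' Finset.univ j (fun k => g (x k))]
      simp
    rw [Finset.sum_congr rfl fun x _ => key x,
      sum_prod_eq (fun k a => P a * ((if k = i then g a else 1) * (if k = j then g a else 1)))]
    apply Finset.prod_eq_zero (Finset.mem_univ i)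
    simp [hij, hg]

lemma var_sum (P g : A → ℝ) (hP1 : ∑ a, P a = 1) (hg : ∑ a, P a * g a = 0) (n : ℕ) :
    ∑ x : Fin n → A, (∏ k, P (x k)) * (∑ i, g (x i)) ^ 2 =
      n * ∑ a, P a * (g a * g a) := by
  classical
  have expand : ∀ x : Fin n → A, (∏ k, P (x k)) * (∑ i, g (x i)) ^ 2
      = ∑ i : Fin n, ∑ j : Fin n, (∏ k, P (x k)) * (g (x i) * g (x j)) := by
    intro x
    rw [sq, Finset.sum_mul_sum, Finset.mul_sum]
    exact Finset.sum_congr rfl fun i _ => by rw [Finset.mul_sum]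
  rw [Finset.sum_congr rfl fun x _ => expand x, Finset.sum_comm]
  have : ∀ i : Fin n, ∑ x : Fin n → A, ∑ j : Fin n, (∏ k, P (x k)) * (g (x i) * g (x j))
      = ∑ a, P a * (g a * g a) := by
    intro i
    rw [Finset.sum_comm]
    rw [Finset.sum_congr rfl fun j _ => exp_pair P g hP1 hg i j]
    simp
  rw [Finset.sum_congr rfl fun i _ => this i]
  simp [mul_comm]

lemma cheby (P : A → ℝ) (hP0 : ∀ a, 0 ≤ P a) (hP1 : ∑ a, P a = 1)
    (g : A → ℝ) (hg : ∑ a, P a * g a = 0) (n : ℕ) (r : ℝ) (hr : 0 < r) :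
    (∑ x ∈ Finset.univ.filter (fun x : Fin n → A => (n : ℝ) * r ≤ ∑ i, g (x i)),
        ∏ k, P (x k)) * ((n : ℝ) * r) ^ 2 ≤ n * ∑ a, P a * (g a * g a) := by
  classical
  rw [Finset.sum_mul]
  calc ∑ x ∈ Finset.univ.filter (fun x : Fin n → A => (n : ℝ) * r ≤ ∑ i, g (x i)),
        (∏ k, P (x k)) * ((n : ℝ) * r) ^ 2
      ≤ ∑ x ∈ Finset.univ.filter (fun x : Fin n → A => (n : ℝ) * r ≤ ∑ i, g (x i)),
        (∏ k, P (x k)) * (∑ i, g (x i)) ^ 2 := by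
        apply Finset.sum_le_sum
        intro x hx
        rw [Finset.mem_filter] at hx
        apply mul_le_mul_of_nonneg_left _ (Finset.prod_nonneg fun k _ => hP0 _)
        have h0 : (0:ℝ) ≤ (n : ℝ) * r := by positivity
        exact pow_le_pow_left₀ h0 hx.2 2
    _ ≤ ∑ x : Fin n → A, (∏ k, P (x k)) * (∑ i, g (x i)) ^ 2 := by
        apply Finset.sum_le_sum_of_subset_of_nonneg (Finset.filter_subset _ _)
        intro x _ _
        have := Finset.prod_nonneg (fun k (_ : k ∈ Finset.univ) => hP0 (x k))
        positivity
    _ = n * ∑ a, P a * (g a * g a) := var_sum P g hP1 hg n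

lemma point_bound (P Q : A → ℝ) (hP0 : ∀ a, 0 ≤ P a) (hQ0 : ∀ a, 0 ≤ Q a)
    (habs : ∀ a, Q a = 0 → P a = 0) (f : A → ℝ)
    (hf : ∀ a, P a ≠ 0 → f a = Real.logb 2 (P a) - Real.logb 2 (Q a))
    {n : ℕ} (x : Fin n → A) (t : ℝ) (ht : ∑ i, f (x i) ≤ t) :
    (2 : ℝ) ^ (-t) * ∏ i, P (x i) ≤ ∏ i, Q (x i) := by
  by_cases hz : ∃ i, P (x i) = 0
  · obtain ⟨i, hi⟩ := hz
    rw [Finset.prod_eq_zero (Finset.mem_univ i) hi, mul_zero]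
    exact Finset.prod_nonneg fun i _ => hQ0 _
  · push_neg at hz
    have hPpos : ∀ i, 0 < P (x i) := fun i => (hP0 _).lt_of_ne' (hz i)
    have hQpos : ∀ i, 0 < Q (x i) := fun i =>
      (hQ0 _).lt_of_ne' (fun h0 => hz i (habs _ h0))
    have key : ∀ i, Q (x i) = P (x i) * (2 : ℝ) ^ (-(f (x i))) := by
      intro i
      rw [hf _ (hz i), neg_sub, Real.rpow_sub (by norm_num : (0:ℝ) < 2),
          Real.rpow_logb two_pos (by norm_num) (hQpos i),
          Real.rpow_logb two_pos (by norm_num) (hPpos i)]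
      rw [mul_div_assoc']
      exact (mul_div_cancel_left₀ _ (hPpos i).ne').symm
    calc (2 : ℝ) ^ (-t) * ∏ i, P (x i)
        ≤ (2 : ℝ) ^ (-∑ i, f (x i)) * ∏ i, P (x i) := by
          apply mul_le_mul_of_nonneg_right _ (Finset.prod_nonneg fun i _ => hP0 _)
          exact Real.rpow_le_rpow_left_iff (by norm_num : (1:ℝ) < 2) |>.2 (neg_le_neg ht)
      _ = ∏ i, Q (x i) := by
          rw [Finset.prod_congr rfl fun i _ => key i, Finset.prod_mul_distrib,
            ← Real.rpow_sum_of_pos (by norm_num : (0:ℝ) < 2)]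
          rw [mul_comm]
          congr 1
          rw [← Finset.sum_neg_distrib]

lemma prodP_eq (Q : A → ℝ) {n : ℕ} (M : Set (Fin n → A)) [DecidablePred (· ∈ M)] :
    prodP Q M = ∑ x ∈ Finset.univ.filter (· ∈ M), ∏ i, Q (x i) := by
  rw [Finset.sum_filter]
  exact Finset.sum_congr rfl fun x _ => by rw [Set.indicator_apply]

lemma prodP_nonneg (Q : A → ℝ) (hQ0 : ∀ a, 0 ≤ Q a) {n : ℕ} (M : Set (Fin n → A)) :
    0 ≤ prodP Q M := by
  apply Finset.sum_nonneg
  intro x _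
  exact Set.indicator_nonneg (fun y _ => Finset.prod_nonneg fun i _ => hQ0 _) x

noncomputable def steinF (P Q : A → ℝ) : A → ℝ :=
  fun a => if P a = 0 then 0 else Real.logb 2 (P a) - Real.logb 2 (Q a)

lemma steinF_mean (P Q : A → ℝ) : ∑ a, P a * steinF P Q a = klD P Q := by
  unfold klD steinF
  refine Finset.sum_congr rfl fun a _ => ?_
  by_cases h : P a = 0 <;> simp [h]

lemma main_step (P Q : A → ℝ) (hP : IsProbDist P) (hQ : IsProbDist Q)
    (habs : ∀ a, Q a = 0 → P a = 0) {ε : ℝ} (hε : 0 < ε) {n : ℕ} (M : Set (Fin n → A)) :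
    (2 : ℝ) ^ (-((n : ℝ) * (klD P Q + ε))) *
      (prodP P M - ∑ x ∈ Finset.univ.filter
        (fun x : Fin n → A => (n : ℝ) * ε ≤ ∑ i, (steinF P Q (x i) - klD P Q)),
        ∏ k, P (x k)) ≤ prodP Q M := by
  classical
  set D := klD P Q with hD
  set p : (Fin n → A) → Prop := fun x => (n : ℝ) * ε ≤ ∑ i, (steinF P Q (x i) - D) with hp
  set S := Finset.univ.filter (· ∈ M) with hS
  have hsplit : ∑ x ∈ S.filter p, ∏ k, P (x k) + ∑ x ∈ S.filter (fun x => ¬ p x), ∏ k, P (x k)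
      = ∑ x ∈ S, ∏ k, P (x k) := Finset.sum_filter_add_sum_filter_not S p _
  have hbad : ∑ x ∈ S.filter p, ∏ k, P (x k)
      ≤ ∑ x ∈ Finset.univ.filter p, ∏ k, P (x k) := by
    apply Finset.sum_le_sum_of_subset_of_nonneg
    · exact Finset.filter_subset_filter p (Finset.filter_subset _ _)
    · exact fun x _ _ => Finset.prod_nonneg fun k _ => hP.1 _
  have h1 : prodP P M - ∑ x ∈ Finset.univ.filter p, ∏ k, P (x k)
      ≤ ∑ x ∈ S.filter (fun x => ¬ p x), ∏ k, P (x k) := by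
    rw [prodP_eq P M, ← hS, ← hsplit]
    linarith
  calc (2 : ℝ) ^ (-((n : ℝ) * (D + ε))) *
      (prodP P M - ∑ x ∈ Finset.univ.filter p, ∏ k, P (x k))
      ≤ (2 : ℝ) ^ (-((n : ℝ) * (D + ε))) * ∑ x ∈ S.filter (fun x => ¬ p x), ∏ k, P (x k) := by
        apply mul_le_mul_of_nonneg_left h1 (Real.rpow_nonneg (by norm_num) _)
    _ = ∑ x ∈ S.filter (fun x => ¬ p x), (2 : ℝ) ^ (-((n : ℝ) * (D + ε))) * ∏ k, P (x k) :=
        Finset.mul_sum _ _ _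
    _ ≤ ∑ x ∈ S.filter (fun x => ¬ p x), ∏ k, Q (x k) := by
        apply Finset.sum_le_sum
        intro x hx
        rw [Finset.mem_filter, hp] at hx
        apply point_bound P Q hP.1 hQ.1 habs (steinF P Q)
          (fun a ha => by simp [steinF, ha])
        have hsum : ∑ i, steinF P Q (x i) = (∑ i, (steinF P Q (x i) - D)) + (n : ℝ) * D := by
          rw [Finset.sum_sub_distrib]
          simp [mul_comm]
        rw [hsum]
        have := le_of_not_ge hx.2
        nlinarith
    _ ≤ ∑ x ∈ S, ∏ k, Q (x k) := by
        apply Finset.sum_le_sum_of_subset_of_nonneg (Finset.filter_subset _ _)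
        exact fun x _ _ => Finset.prod_nonneg fun k _ => hQ.1 _
    _ = prodP Q M := (prodP_eq Q M).symm

end aux

/-- Classical Stein lower bound: if `liminf Pⁿ(Mₙ) > 0` then
`liminf (1/n) log Qⁿ(Mₙ) ≥ −H(P,Q)`. -/
theorem stein_lower_bound {A : Type*} [Fintype A] (P Q : A → ℝ)
    (hP : IsProbDist P) (hQ : IsProbDist Q) (M : (n : ℕ) → Set (Fin n → A))
    (h : 0 < Filter.liminf (fun n : ℕ => prodP P (M n)) atTop) :
    -(klDE P Q) ≤
      Filter.liminf (fun n : ℕ => elog2 (prodP Q (M n)) * (((n : ℝ)⁻¹ : ℝ) : EReal)) atTop := by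
  classical
  by_cases habs : ∀ a, Q a = 0 → P a = 0
  swap
  · rw [klDE, if_neg habs]
    simp
  rw [klDE, if_pos habs]
  set D := klD P Q with hD
  set g : A → ℝ := fun a => steinF P Q a - D with hgdef
  have hg0 : ∑ a, P a * g a = 0 := by
    simp only [hgdef, mul_sub, Finset.sum_sub_distrib, steinF_mean P Q, ← Finset.sum_mul,
      hP.2, one_mul, hD, sub_self]
  set σ := ∑ a, P a * (g a * g a) with hσ
  set c := Filter.liminf (fun n : ℕ => prodP P (M n)) atTop / 2 with hc
  have hcpos : 0 < c := by positivity
  have hclt : c < Filter.liminf (fun n : ℕ => prodP P (M n)) atTop := by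
    rw [hc]; linarith
  have E1 : ∀ᶠ n : ℕ in atTop, c < prodP P (M n) := by
    exact Filter.eventually_lt_of_lt_liminf hclt
      (Filter.isBoundedUnder_of ⟨0, fun n => prodP_nonneg P hP.1 (M n)⟩)
  set L := Filter.liminf (fun n : ℕ => elog2 (prodP Q (M n)) * (((n : ℝ)⁻¹ : ℝ) : EReal)) atTop
    with hL
  have key : ∀ ε : ℝ, 0 < ε → ((-(D + ε) : ℝ) : EReal) ≤ L := by
    intro ε hε
    have E2 : ∀ᶠ n : ℕ in atTop, σ ≤ c / 2 * ((n : ℝ) * ε ^ 2) := by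
      have t1 : Filter.Tendsto (fun n : ℕ => (n : ℝ)) atTop atTop := tendsto_natCast_atTop_atTop
      filter_upwards [t1.eventually_ge_atTop (σ / (c / 2 * ε ^ 2))] with n hn
      have hden : 0 < c / 2 * ε ^ 2 := by positivity
      rw [div_le_iff₀ hden] at hn
      nlinarith
    have E3 : ∀ᶠ n : ℕ in atTop, 1 ≤ n := Filter.eventually_ge_atTop 1
    have Emain : ∀ᶠ n : ℕ in atTop,
        ((-(D + ε) + Real.logb 2 (c / 2) * (n : ℝ)⁻¹ : ℝ) : EReal)
          ≤ elog2 (prodP Q (M n)) * (((n : ℝ)⁻¹ : ℝ) : EReal) := by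
      filter_upwards [E1, E2, E3] with n h1 h2 h3
      have hn0 : (0 : ℝ) < n := by exact_mod_cast h3
      -- bad set bound
      set bad := ∑ x ∈ Finset.univ.filter
        (fun x : Fin n → A => (n : ℝ) * ε ≤ ∑ i, g (x i)), ∏ k, P (x k) with hbad
      have hch := cheby P hP.1 hP.2 g hg0 n ε hε
      have hbadle : bad ≤ c / 2 := by
        have hsq : (0 : ℝ) < ((n : ℝ) * ε) ^ 2 := by positivity
        have : bad * ((n : ℝ) * ε) ^ 2 ≤ c / 2 * ((n : ℝ) * ε) ^ 2 := by
          calc bad * ((n : ℝ) * ε) ^ 2 ≤ (n : ℝ) * σ := hch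
            _ ≤ (n : ℝ) * (c / 2 * ((n : ℝ) * ε ^ 2)) := by
                apply mul_le_mul_of_nonneg_left h2 (le_of_lt hn0)
            _ = c / 2 * ((n : ℝ) * ε) ^ 2 := by ring
        exact le_of_mul_le_mul_right this hsq
      have hstep := main_step P Q hP hQ habs hε (M n)
      have hlower : (2 : ℝ) ^ (-((n : ℝ) * (D + ε))) * (c / 2) ≤ prodP Q (M n) := by
        refine le_trans ?_ hstep
        apply mul_le_mul_of_nonneg_left _ (Real.rpow_nonneg (by norm_num) _)
        linarith
      have hQpos : 0 < prodP Q (M n) := by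
        refine lt_of_lt_of_le ?_ hlower
        positivity
      have hlog : -((n : ℝ) * (D + ε)) + Real.logb 2 (c / 2) ≤ Real.logb 2 (prodP Q (M n)) := by
        have hb : (2 : ℝ) ^ (-((n : ℝ) * (D + ε))) * (c / 2) > 0 := by positivity
        have := Real.logb_le_logb_of_le (by norm_num : (1:ℝ) < 2) hb hlower
        rwa [Real.logb_mul (by positivity) (by positivity),
          Real.logb_rpow (by norm_num) (by norm_num)] at this
      rw [elog2, if_neg (not_le.2 hQpos), ← EReal.coe_mul, EReal.coe_le_coe_iff]
      have hmul : (-((n : ℝ) * (D + ε)) + Real.logb 2 (c / 2)) * (n : ℝ)⁻¹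
          ≤ Real.logb 2 (prodP Q (M n)) * (n : ℝ)⁻¹ :=
        mul_le_mul_of_nonneg_right hlog (by positivity)
      refine le_trans (le_of_eq ?_) hmul
      field_simp
    have hlim : Filter.Tendsto
        (fun n : ℕ => ((-(D + ε) + Real.logb 2 (c / 2) * (n : ℝ)⁻¹ : ℝ) : EReal)) atTop
        (nhds ((-(D + ε) : ℝ) : EReal)) := by
      rw [EReal.tendsto_coe]
      have : Filter.Tendsto (fun n : ℕ => -(D + ε) + Real.logb 2 (c / 2) * (n : ℝ)⁻¹) atTop
          (nhds (-(D + ε) + Real.logb 2 (c / 2) * 0)) :=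
        tendsto_const_nhds.add (tendsto_const_nhds.mul tendsto_inv_atTop_nhds_zero_nat)
      simpa using this
    calc ((-(D + ε) : ℝ) : EReal)
        = Filter.liminf
            (fun n : ℕ => ((-(D + ε) + Real.logb 2 (c / 2) * (n : ℝ)⁻¹ : ℝ) : EReal)) atTop :=
          (hlim.liminf_eq).symm
      _ ≤ L := Filter.liminf_le_liminf Emain
  -- conclude by density
  rw [show (-(↑D : EReal)) = ((-D : ℝ) : EReal) by rw [EReal.coe_neg]]
  by_contra hcon
  push_neg at hcon
  obtain ⟨z, hz1, hz2⟩ := exists_between hcon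
  have hz1' : ((-(D + 1) : ℝ) : EReal) < z := lt_of_le_of_lt (key 1 one_pos) hz1
  have hzbot : z ≠ ⊥ := ne_bot_of_gt hz1'
  have hztop : z ≠ ⊤ := ne_top_of_lt hz2
  lift z to ℝ using ⟨hztop, hzbot⟩ with r
  rw [EReal.coe_lt_coe_iff] at hz2
  have hεpos : 0 < -D - r := by linarith
  have := key (-D - r) hεpos
  rw [show -(D + (-D - r)) = r by ring] at this
  exact absurd (lt_of_le_of_lt this hz1) (lt_irrefl _)
end
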